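/- Let Γ₂, M̃, B, Γ₁ be fixed 2n×2n real matrices with Γ₂, M̃ symmetric and with B − Γ₁ symmetric positive semidefinite, and let C : [0,∞) → ℝ^{2n×2n} be continuous. Let G : [0,∞) → ℝ^{2n×2n} solve the matrix Riccati equation dG/dt = (Γ₂ + M̃ − C(t)ᵀ)G + G(Γ₂ + M̃ − C(t)) + G(Γ₁ − B)G with G(0) symmetric positive definite. Then G(t) is symmetric positive definite for all t ≥ 0, and Σ(t) := G(t)⁻¹ solves the differential Lyapunov equation dΣ/dt = −Σ(Γ₂ + M̃ − C(t)ᵀ) − (Γ₂ + M̃ − C(t))Σ − (Γ₁ − B) with Σ(0) = G(0)⁻¹. -/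

import Mathlib

/-!
Where `G` is invertible, `Σ = G⁻¹` satisfies the Lyapunov equation, which is linear in `Σ`;
by Grönwall, `‖Σ‖` stays bounded on every bounded time interval on which `G` is positive definite.
At the first time `T` at which `G` would cease to be positive definite, this bound gives
`x ⬝ᵥ G s *ᵥ x ≥ ‖x‖² / m` for `s < T`, which passes to the limit `s → T`; so `G T` is positive
definite, hence so is `G` near `T`, a contradiction. Symmetry of `G` comes from uniqueness:
`Gᵀ` solves the same Riccati equation since `Γ₁ - B` is symmetric.
-/

open Matrix Set Filter Topology

section Ring

variable {R : Type*} [Ring R]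

/-- In the theorem `a' = Γ₂ + M̃ - Cᵀ`, `a = Γ₂ + M̃ - C` and `k = Γ₁ - B`. -/
def riccati (a' a k x : R) : R := a' * x + x * a + x * k * x

def lyapunov (a' a k σ : R) : R := -(σ * a') - a * σ - k

theorem neg_inverse_mul_riccati_mul_inverse {x : R} (hx : IsUnit x) (a' a k : R) :
    -(Ring.inverse x * riccati a' a k x * Ring.inverse x) = lyapunov a' a k (Ring.inverse x) := by
  obtain ⟨u, rfl⟩ := hx
  simp only [riccati, lyapunov, Ring.inverse_unit, mul_add, add_mul, mul_assoc,
    Units.inv_mul_cancel_left, Units.mul_inv, mul_one]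
  noncomm_ring

end Ring

section NormedRing

variable {R : Type*} [NormedRing R]

theorem norm_riccati_sub_le (a' a k : R) {r : ℝ} {x y : R} (hx : ‖x‖ ≤ r) (hy : ‖y‖ ≤ r) :
    ‖riccati a' a k x - riccati a' a k y‖ ≤ (‖a'‖ + ‖a‖ + 2 * r * ‖k‖) * ‖x - y‖ := by
  have hsplit : riccati a' a k x - riccati a' a k y
      = a' * (x - y) + (x - y) * a + (x - y) * k * x + y * k * (x - y) := by
    simp only [riccati]; noncomm_ring
  calc ‖riccati a' a k x - riccati a' a k y‖
      ≤ ‖a'‖ * ‖x - y‖ + ‖x - y‖ * ‖a‖ + ‖x - y‖ * ‖k‖ * ‖x‖ + ‖y‖ * ‖k‖ * ‖x - y‖ := by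
        rw [hsplit]
        refine norm_add₄_le.trans ?_
        gcongr <;> first | exact norm_mul_le _ _ | exact norm_mul₃_le
    _ ≤ ‖a'‖ * ‖x - y‖ + ‖x - y‖ * ‖a‖ + ‖x - y‖ * ‖k‖ * r + r * ‖k‖ * ‖x - y‖ := by gcongr
    _ = (‖a'‖ + ‖a‖ + 2 * r * ‖k‖) * ‖x - y‖ := by ring

theorem lipschitzOnWith_riccati (a' a k : R) (r : ℝ) :
    LipschitzOnWith (‖a'‖ + ‖a‖ + 2 * r * ‖k‖).toNNReal (riccati a' a k)
      (Metric.closedBall 0 r) :=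
  LipschitzOnWith.of_dist_le' fun x hx y hy => by
    simpa only [dist_eq_norm] using
      norm_riccati_sub_le a' a k (mem_closedBall_zero_iff.1 hx) (mem_closedBall_zero_iff.1 hy)

theorem norm_lyapunov_le (a' a k σ : R) :
    ‖lyapunov a' a k σ‖ ≤ (‖a'‖ + ‖a‖) * ‖σ‖ + ‖k‖ := by
  calc ‖lyapunov a' a k σ‖ ≤ ‖σ * a'‖ + ‖a * σ‖ + ‖k‖ := by
        refine (norm_sub_le _ _).trans (add_le_add_left ((norm_sub_le _ _).trans ?_) _)
        rw [norm_neg]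
    _ ≤ ‖σ‖ * ‖a'‖ + ‖a‖ * ‖σ‖ + ‖k‖ := by gcongr <;> exact norm_mul_le _ _
    _ = (‖a'‖ + ‖a‖) * ‖σ‖ + ‖k‖ := by ring

variable [NormedAlgebra ℝ R]

theorem eqOn_of_riccati {a' a : ℝ → R} {k : R} {f g : ℝ → R}
    (ha' : ContinuousOn a' (Ici 0)) (ha : ContinuousOn a (Ici 0))
    (hf : ∀ t ∈ Ici (0 : ℝ), HasDerivWithinAt f (riccati (a' t) (a t) k (f t)) (Ici 0) t)
    (hg : ∀ t ∈ Ici (0 : ℝ), HasDerivWithinAt g (riccati (a' t) (a t) k (g t)) (Ici 0) t)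
    (h0 : f 0 = g 0) : EqOn f g (Ici 0) := by
  intro b hb
  have hsub : Icc 0 b ⊆ Ici (0 : ℝ) := Icc_subset_Ici_self
  have hcont {h : ℝ → R} (hh : ∀ t ∈ Ici (0 : ℝ),
      HasDerivWithinAt h (riccati (a' t) (a t) k (h t)) (Ici 0) t) : ContinuousOn h (Icc 0 b) :=
    fun t ht => (hh t (hsub ht)).continuousWithinAt.mono hsub
  have hright {h : ℝ → R} (hh : ∀ t ∈ Ici (0 : ℝ),
      HasDerivWithinAt h (riccati (a' t) (a t) k (h t)) (Ici 0) t) (t : ℝ) (ht : t ∈ Ico 0 b) :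
      HasDerivWithinAt h (riccati (a' t) (a t) k (h t)) (Ici t) t :=
    (hh t ht.1).mono (Ici_subset_Ici.2 ht.1)
  obtain ⟨α', hα'⟩ := isCompact_Icc.exists_bound_of_continuousOn (ha'.mono hsub)
  obtain ⟨α, hα⟩ := isCompact_Icc.exists_bound_of_continuousOn (ha.mono hsub)
  obtain ⟨rf, hrf⟩ := isCompact_Icc.exists_bound_of_continuousOn (hcont hf)
  obtain ⟨rg, hrg⟩ := isCompact_Icc.exists_bound_of_continuousOn (hcont hg)
  set r := max rf rg
  refine ODE_solution_unique_of_mem_Icc_right (s := fun _ => Metric.closedBall 0 r)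
    (K := (α' + α + 2 * r * ‖k‖).toNNReal) (fun t ht => ?_) (hcont hf) (hright hf)
    (fun t ht => ?_) (hcont hg) (hright hg) (fun t ht => ?_) h0 ⟨hb, le_rfl⟩
  · have ht' := Ico_subset_Icc_self ht
    refine (lipschitzOnWith_riccati _ _ k r).weaken (Real.toNNReal_le_toNNReal ?_)
    linarith [hα' t ht', hα t ht']
  · exact mem_closedBall_zero_iff.2 ((hrf t (Ico_subset_Icc_self ht)).trans (le_max_left _ _))
  · exact mem_closedBall_zero_iff.2 ((hrg t (Ico_subset_Icc_self ht)).trans (le_max_right _ _))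

theorem norm_le_gronwallBound_of_lyapunov {σ a' a : ℝ → R} {k : R} {α' α b : ℝ}
    (hσ : ∀ t ∈ Icc 0 b, HasDerivWithinAt σ (lyapunov (a' t) (a t) k (σ t)) (Ici 0) t)
    (ha' : ∀ t ∈ Icc 0 b, ‖a' t‖ ≤ α') (ha : ∀ t ∈ Icc 0 b, ‖a t‖ ≤ α) :
    ∀ t ∈ Icc 0 b, ‖σ t‖ ≤ gronwallBound ‖σ 0‖ (α' + α) ‖k‖ t := by
  have hσc : ContinuousOn σ (Icc 0 b) :=
    fun t ht => (hσ t ht).continuousWithinAt.mono Icc_subset_Ici_self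
  simpa using norm_le_gronwallBound_of_norm_deriv_right_le hσc
    (fun t ht => (hσ t (Ico_subset_Icc_self ht)).mono (Ici_subset_Ici.2 ht.1)) le_rfl
    fun t ht => (norm_lyapunov_le _ _ _ _).trans (by
      have ht' := Ico_subset_Icc_self ht
      gcongr
      exacts [ha' t ht', ha t ht'])

variable [CompleteSpace R]

theorem HasDerivWithinAt.ringInverse {f : ℝ → R} {f' : R} {s : Set ℝ} {t : ℝ}
    (hf : HasDerivWithinAt f f' s t) (ht : IsUnit (f t)) :
    HasDerivWithinAt (fun u => Ring.inverse (f u))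
      (-(Ring.inverse (f t) * f' * Ring.inverse (f t))) s t := by
  obtain ⟨u, hu⟩ := ht
  have hinv : HasFDerivAt Ring.inverse _ (f t) := hu ▸ hasFDerivAt_ringInverse (𝕜 := ℝ) u
  simpa [← hu, Function.comp_def] using hinv.comp_hasDerivWithinAt t hf

theorem HasDerivWithinAt.ringInverse_of_riccati {f : ℝ → R} {a' a k : R} {s : Set ℝ} {t : ℝ}
    (hf : HasDerivWithinAt f (riccati a' a k (f t)) s t) (ht : IsUnit (f t)) :
    HasDerivWithinAt (fun u => Ring.inverse (f u)) (lyapunov a' a k (Ring.inverse (f t))) s t :=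
  neg_inverse_mul_riccati_mul_inverse ht a' a k ▸ hf.ringInverse ht

theorem exists_norm_inverse_le_of_riccati {a' a : ℝ → R} {k : R} {f : ℝ → R}
    (ha' : ContinuousOn a' (Ici 0)) (ha : ContinuousOn a (Ici 0))
    (hf : ∀ t ∈ Ici (0 : ℝ), HasDerivWithinAt f (riccati (a' t) (a t) k (f t)) (Ici 0) t)
    {T : ℝ} (hunit : ∀ t ∈ Ico 0 T, IsUnit (f t)) :
    ∃ m, ∀ t ∈ Ico 0 T, ‖Ring.inverse (f t)‖ ≤ m := by
  have hsub : Icc 0 T ⊆ Ici (0 : ℝ) := Icc_subset_Ici_self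
  obtain ⟨α', hα'⟩ := isCompact_Icc.exists_bound_of_continuousOn (ha'.mono hsub)
  obtain ⟨α, hα⟩ := isCompact_Icc.exists_bound_of_continuousOn (ha.mono hsub)
  refine ⟨gronwallBound ‖Ring.inverse (f 0)‖ (α' + α) ‖k‖ T, fun t ht => ?_⟩
  have hsT : Icc 0 t ⊆ Icc 0 T := Icc_subset_Icc_right ht.2.le
  have hbound := norm_le_gronwallBound_of_lyapunov (σ := fun u => Ring.inverse (f u))
    (fun u hu => (hf u hu.1).ringInverse_of_riccati
      (hunit u ⟨hu.1, hu.2.trans_lt ht.2⟩))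
    (fun u hu => hα' u (hsT hu)) (fun u hu => hα u (hsT hu)) t ⟨ht.1, le_rfl⟩
  have hα0 : 0 ≤ α' + α := by
    have h0 : (0 : ℝ) ∈ Icc 0 T := ⟨le_rfl, ht.1.trans ht.2.le⟩
    linarith [(norm_nonneg _).trans (hα' 0 h0), (norm_nonneg _).trans (hα 0 h0)]
  exact hbound.trans (gronwallBound_mono (norm_nonneg _) (norm_nonneg _) hα0 ht.2.le)

end NormedRing

theorem hasDerivWithinAt_matrix_iff {𝕜 m n : Type*} [NontriviallyNormedField 𝕜] [Fintype m]
    [Fintype n] {F : 𝕜 → Matrix m n 𝕜} {F' : Matrix m n 𝕜} {s : Set 𝕜} {t : 𝕜} :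
    HasDerivWithinAt F F' s t ↔ ∀ i j, HasDerivWithinAt (fun u => F u i j) (F' i j) s t :=
  hasDerivWithinAt_pi.trans (forall_congr' fun _ => hasDerivWithinAt_pi)

section Matrix

open scoped Matrix.Norms.L2Operator

variable {ι : Type*} [Fintype ι] [DecidableEq ι]

theorem abs_dotProduct_mulVec_le (M : Matrix ι ι ℝ) (x : ι → ℝ) :
    |x ⬝ᵥ M *ᵥ x| ≤ ‖M‖ * (x ⬝ᵥ x) := by
  have h := abs_real_inner_le_norm (WithLp.toLp 2 x) (toEuclideanCLM (𝕜 := ℝ) M (WithLp.toLp 2 x))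
  rw [inner_toEuclideanCLM] at h
  refine h.trans ?_
  have hM := (toEuclideanCLM (𝕜 := ℝ) M).le_opNorm (WithLp.toLp 2 x)
  have hx : ‖WithLp.toLp 2 x‖ * ‖WithLp.toLp 2 x‖ = x ⬝ᵥ x := by
    rw [← sq, EuclideanSpace.norm_sq_eq]
    simp [dotProduct, sq]
  calc _ ≤ ‖WithLp.toLp 2 x‖ * (‖M‖ * ‖WithLp.toLp 2 x‖) := by gcongr; exact hM
    _ = ‖M‖ * (x ⬝ᵥ x) := by rw [← hx]; ring

theorem Matrix.PosDef.dotProduct_self_le {P : Matrix ι ι ℝ} (hP : P.PosDef) (x : ι → ℝ) :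
    x ⬝ᵥ x ≤ ‖P⁻¹‖ * (x ⬝ᵥ P *ᵥ x) := by
  -- Cauchy–Schwarz for `⟪y, z⟫ = y ⬝ᵥ P *ᵥ z` at `x` and `P⁻¹ *ᵥ x`.
  let _ := P.toSeminormedAddCommGroup hP.posSemidef
  let _ := P.toInnerProductSpace hP.posSemidef
  have hinner (y z : ι → ℝ) : inner ℝ y z = y ⬝ᵥ P *ᵥ z := by
    show (P *ᵥ z) ⬝ᵥ star y = _
    rw [star_trivial, dotProduct_comm]
  have hPP : P *ᵥ (P⁻¹ *ᵥ x) = x := by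
    rw [mulVec_mulVec, mul_nonsing_inv _ hP.det_pos.ne'.isUnit, one_mulVec]
  have hcs := real_inner_mul_inner_self_le x (P⁻¹ *ᵥ x)
  simp only [hinner, hPP] at hcs
  rw [dotProduct_comm (P⁻¹ *ᵥ x)] at hcs
  have hinv := (le_abs_self _).trans (abs_dotProduct_mulVec_le P⁻¹ x)
  have hxx : 0 ≤ x ⬝ᵥ x := by simpa using dotProduct_self_star_nonneg x
  have hxPx : 0 ≤ x ⬝ᵥ P *ᵥ x := by simpa using hP.posSemidef.dotProduct_mulVec_nonneg x
  have hsq : x ⬝ᵥ x * x ⬝ᵥ x ≤ (‖P⁻¹‖ * x ⬝ᵥ P *ᵥ x) * x ⬝ᵥ x :=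
    calc _ ≤ x ⬝ᵥ P *ᵥ x * (‖P⁻¹‖ * x ⬝ᵥ x) := hcs.trans (by gcongr)
      _ = _ := by ring
  rcases hxx.eq_or_lt with hx0 | hxpos
  · rw [← hx0]; positivity
  · exact le_of_mul_le_mul_right hsq hxpos

theorem Matrix.PosDef.of_norm_sub_mul_lt_one {P N : Matrix ι ι ℝ} (hP : P.PosDef)
    (hN : N.IsHermitian) (h : ‖N - P‖ * ‖P⁻¹‖ < 1) : N.PosDef := by
  refine .of_dotProduct_mulVec_pos hN fun x hx => ?_
  rw [star_trivial]
  have hxPx : 0 < x ⬝ᵥ P *ᵥ x := by simpa using hP.dotProduct_mulVec_pos hx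
  have hself := hP.dotProduct_self_le x
  have hdiff := neg_le_of_abs_le (abs_dotProduct_mulVec_le (N - P) x)
  rw [sub_mulVec, dotProduct_sub] at hdiff
  nlinarith [mul_le_mul_of_nonneg_left hself (norm_nonneg (N - P)), mul_pos (sub_pos.2 h) hxPx]

theorem Matrix.PosDef.of_tendsto {α : Type*} {l : Filter α} [l.NeBot] {G : α → Matrix ι ι ℝ}
    {P : Matrix ι ι ℝ} {m : ℝ} (hG : Tendsto G l (𝓝 P)) (hP : P.IsHermitian)
    (hpos : ∀ᶠ a in l, (G a).PosDef ∧ ‖(G a)⁻¹‖ ≤ m) : P.PosDef := by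
  obtain ⟨a, -, ha⟩ := hpos.exists
  refine .of_dotProduct_mulVec_pos hP fun x hx => ?_
  rw [star_trivial]
  have hquad : Continuous fun M : Matrix ι ι ℝ => m * (x ⬝ᵥ M *ᵥ x) := by fun_prop
  have hle : x ⬝ᵥ x ≤ m * (x ⬝ᵥ P *ᵥ x) :=
    ge_of_tendsto ((hquad.tendsto P).comp hG) <| hpos.mono fun a ha =>
      (ha.1.dotProduct_self_le x).trans <| mul_le_mul_of_nonneg_right ha.2 <| by
        simpa using ha.1.posSemidef.dotProduct_mulVec_nonneg x
  have hxx : 0 < x ⬝ᵥ x := by simpa using dotProduct_self_star_pos_iff.2 hx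
  exact pos_of_mul_pos_right (hxx.trans_le hle) ((norm_nonneg _).trans ha)

theorem posDef_of_forall_norm_inv_le {G : ℝ → Matrix ι ι ℝ} (hG : ContinuousOn G (Ici 0))
    (hherm : ∀ t ∈ Ici (0 : ℝ), (G t).IsHermitian) (h0 : (G 0).PosDef)
    (hbound : ∀ T, (∀ t ∈ Ico 0 T, (G t).PosDef) → ∃ m, ∀ t ∈ Ico 0 T, ‖(G t)⁻¹‖ ≤ m) :
    ∀ t ∈ Ici (0 : ℝ), (G t).PosDef := by
  by_contra! ⟨t₀, ht₀, hbad⟩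
  set bad := {t ∈ Ici (0 : ℝ) | ¬(G t).PosDef}
  have hne : bad.Nonempty := ⟨t₀, ht₀, hbad⟩
  have hbdd : BddBelow bad := ⟨0, fun _ ht => ht.1⟩
  set T := sInf bad
  have hT0 : 0 ≤ T := le_csInf hne fun _ ht => ht.1
  have hbefore : ∀ t ∈ Ico 0 T, (G t).PosDef := fun t ht =>
    by_contra fun h => (csInf_le hbdd ⟨ht.1, h⟩).not_gt ht.2
  have hGT : (G T).PosDef := by
    rcases hT0.eq_or_lt with hT | hT
    · rwa [← hT]
    obtain ⟨m, hm⟩ := hbound T hbefore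
    have : (𝓝[Ico 0 T] T).NeBot := by
      rw [nhdsWithin_Ico_eq_nhdsLT hT]
      infer_instance
    exact .of_tendsto ((hG T hT0).mono Ico_subset_Ici_self) (hherm T hT0)
      (eventually_nhdsWithin_of_forall fun t ht => ⟨hbefore t ht, hm t ht⟩)
  have hnear : ∀ᶠ t in 𝓝[Ici 0] T, (G t).PosDef := by
    have hlim : Tendsto (fun t => ‖G t - G T‖ * ‖(G T)⁻¹‖) (𝓝[Ici 0] T) (𝓝 0) := by
      simpa using ((hG T hT0).tendsto.sub_const (G T)).norm.mul_const ‖(G T)⁻¹‖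
    filter_upwards [hlim.eventually_lt_const one_pos, self_mem_nhdsWithin] with t ht ht0
    exact hGT.of_norm_sub_mul_lt_one (hherm t ht0) ht
  have hbadT : (𝓝[bad] T).NeBot := mem_closure_iff_nhdsWithin_neBot.1 (csInf_mem_closure hne hbdd)
  have hbad0 : bad ⊆ Ici 0 := fun _ ht => ht.1
  obtain ⟨t, hpos, -, hnpos⟩ :=
    ((hnear.filter_mono (nhdsWithin_mono T hbad0)).and self_mem_nhdsWithin).exists
  exact hnpos hpos

theorem HasDerivWithinAt.matrix_inv_of_riccati {G : ℝ → Matrix ι ι ℝ} {a' a k : Matrix ι ι ℝ}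
    {s : Set ℝ} {t : ℝ} (hG : HasDerivWithinAt G (riccati a' a k (G t)) s t)
    (ht : IsUnit (G t)) :
    HasDerivWithinAt (fun u => (G u)⁻¹) (lyapunov a' a k (G t)⁻¹) s t := by
  simp only [nonsing_inv_eq_ringInverse]
  exact hG.ringInverse_of_riccati ht

theorem HasDerivWithinAt.transpose_of_riccati {G : ℝ → Matrix ι ι ℝ} {a k : Matrix ι ι ℝ}
    {s : Set ℝ} {t : ℝ} (hk : k.IsSymm) (hG : HasDerivWithinAt G (riccati aᵀ a k (G t)) s t) :
    HasDerivWithinAt (fun u => (G u)ᵀ) (riccati aᵀ a k (G t)ᵀ) s t := by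
  have htr : riccati aᵀ a k (G t)ᵀ = (riccati aᵀ a k (G t))ᵀ := by
    simp only [riccati, transpose_add, transpose_mul, transpose_transpose, hk.eq, Matrix.mul_assoc]
    abel
  rw [htr, hasDerivWithinAt_matrix_iff]
  exact fun i j => hasDerivWithinAt_matrix_iff.1 hG j i

theorem posDef_of_riccati {A : ℝ → Matrix ι ι ℝ} {K : Matrix ι ι ℝ} {G : ℝ → Matrix ι ι ℝ}
    (hA : ContinuousOn A (Ici 0)) (hK : K.IsSymm)
    (hG : ∀ t ∈ Ici (0 : ℝ), HasDerivWithinAt G (riccati (A t)ᵀ (A t) K (G t)) (Ici 0) t)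
    (h0 : (G 0).PosDef) :
    ∀ t ∈ Ici (0 : ℝ), (G t).PosDef := by
  have hAT : ContinuousOn (fun t => (A t)ᵀ) (Ici 0) :=
    continuous_id.matrix_transpose.comp_continuousOn hA
  have hsymm : EqOn (fun t => (G t)ᵀ) G (Ici 0) :=
    eqOn_of_riccati hAT hA (fun t ht => (hG t ht).transpose_of_riccati hK) hG
      (isHermitian_iff_isSymm.1 h0.isHermitian)
  refine posDef_of_forall_norm_inv_le (fun t ht => (hG t ht).continuousWithinAt)
    (fun t ht => isHermitian_iff_isSymm.2 (hsymm ht)) h0 fun T hT => ?_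
  obtain ⟨m, hm⟩ := exists_norm_inverse_le_of_riccati hAT hA hG fun t ht => (hT t ht).isUnit
  exact ⟨m, fun t ht => (nonsing_inv_eq_ringInverse (G t)).symm ▸ hm t ht⟩

end Matrix

/-- If `Γ₂, M̃` are symmetric, `B − Γ₁` is symmetric positive
semidefinite, `C(t)` is continuous on `[0,∞)`, and `G` solves the matrix
Riccati equation `dG/dt = (Γ₂+M̃−C(t)ᵀ)G + G(Γ₂+M̃−C(t)) + G(Γ₁−B)G` with
`G(0)` symmetric positive definite, then `G(t)` is symmetric positive definite
for all `t ≥ 0`, and `Σ(t) := G(t)⁻¹` solves the differential Lyapunov equation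
`dΣ/dt = −Σ(Γ₂+M̃−C(t)ᵀ) − (Γ₂+M̃−C(t))Σ − (Γ₁−B)` with `Σ(0) = G(0)⁻¹`. -/
theorem riccati_solution_posDef_and_inverse_solves_lyapunov
    (n : ℕ) (Γ₁ Γ₂ Mt B : Matrix (Fin n ⊕ Fin n) (Fin n ⊕ Fin n) ℝ)
    (hΓ₂ : Γ₂.IsSymm) (hMt : Mt.IsSymm) (hBΓ₁ : (B - Γ₁).PosSemidef)
    (C : ℝ → Matrix (Fin n ⊕ Fin n) (Fin n ⊕ Fin n) ℝ)
    (hC : ContinuousOn C (Ici (0 : ℝ)))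
    (G : ℝ → Matrix (Fin n ⊕ Fin n) (Fin n ⊕ Fin n) ℝ)
    (hG : ∀ t ∈ Ici (0 : ℝ), ∀ i j, HasDerivWithinAt (fun s => G s i j)
      (((Γ₂ + Mt - (C t)ᵀ) * G t + G t * (Γ₂ + Mt - C t)
        + G t * (Γ₁ - B) * G t) i j) (Ici (0 : ℝ)) t)
    (hG0 : (G 0).PosDef) :
    (∀ t ∈ Ici (0 : ℝ), (G t).PosDef)
      ∧ (∀ t ∈ Ici (0 : ℝ), ∀ i j, HasDerivWithinAt (fun s => (G s)⁻¹ i j)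
          ((-((G t)⁻¹ * (Γ₂ + Mt - (C t)ᵀ)) - (Γ₂ + Mt - C t) * (G t)⁻¹
            - (Γ₁ - B)) i j) (Ici (0 : ℝ)) t)
      ∧ (fun t => (G t)⁻¹) 0 = (G 0)⁻¹ := by
  have hA : ContinuousOn (fun t => Γ₂ + Mt - C t) (Ici 0) := continuousOn_const.sub hC
  have hAT (t : ℝ) : Γ₂ + Mt - (C t)ᵀ = (Γ₂ + Mt - C t)ᵀ := by
    rw [transpose_sub, transpose_add, hΓ₂.eq, hMt.eq]
  have hK : (Γ₁ - B).IsSymm := by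
    simpa using (isHermitian_iff_isSymm.1 hBΓ₁.isHermitian).neg
  have hRic (t : ℝ) (ht : t ∈ Ici (0 : ℝ)) :
      HasDerivWithinAt G (riccati (Γ₂ + Mt - C t)ᵀ (Γ₂ + Mt - C t) (Γ₁ - B) (G t)) (Ici 0) t := by
    rw [← hAT]
    exact hasDerivWithinAt_matrix_iff.2 (hG t ht)
  have hpos := posDef_of_riccati hA hK hRic hG0
  refine ⟨hpos, fun t ht => ?_, rfl⟩
  have hInv := (hRic t ht).matrix_inv_of_riccati (hpos t ht).isUnit
  rw [← hAT] at hInv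
  exact hasDerivWithinAt_matrix_iff.1 hInv
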